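/- Let A ∈ SL(2,ℝ) be hyperbolic with projective attractor a and repeller r, and let m be a finite Borel measure on ℝP¹ such that m(Â⁻ˡ(K)) ≥ m(K) for every compact set K ⊆ ℝP¹ and every l ≥ 1. Then m is supported on {a, r}. -/

import Mathlib

open Matrix MeasureTheory Set Filter Topology
open scoped ENNReal NNReal

noncomputable section

abbrev E2 := EuclideanSpace ℝ (Fin 2)
abbrev SL2 := Matrix.SpecialLinearGroup (Fin 2) ℝ

/-- The real projective line, with the quotient topology. -/
abbrev RP1 := Projectivization ℝ E2

instance : TopologicalSpace RP1 :=
  inferInstanceAs (TopologicalSpace (Quotient (projectivizationSetoid ℝ E2)))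
instance : MeasurableSpace RP1 := borel _
instance : BorelSpace RP1 := ⟨rfl⟩

/-- An element of `SL(2,ℝ)` as a continuous linear operator of Euclidean `ℝ²`. -/
def sl2CLM (A : SL2) : E2 →L[ℝ] E2 :=
  Matrix.toEuclideanCLM (𝕜 := ℝ) (A : Matrix (Fin 2) (Fin 2) ℝ)

theorem sl2CLM_injective (A : SL2) : Function.Injective (sl2CLM A) := by
  intro v w hvw
  have h2 := congrArg (sl2CLM A⁻¹) hvw
  simp only [sl2CLM] at h2
  rw [← ContinuousLinearMap.comp_apply, ← ContinuousLinearMap.comp_apply,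
    ← ContinuousLinearMap.mul_def, ← _root_.map_mul] at h2
  have h3 : ((A⁻¹ : SL2) : Matrix (Fin 2) (Fin 2) ℝ) * (A : Matrix (Fin 2) (Fin 2) ℝ) = 1 := by
    rw [← Matrix.SpecialLinearGroup.coe_mul, inv_mul_cancel, Matrix.SpecialLinearGroup.coe_one]
  rw [h3] at h2
  simpa using h2

/-- Projective action of `SL(2,ℝ)` on the real projective line. -/
def projAction (A : SL2) : RP1 → RP1 :=
  Projectivization.map ((sl2CLM A) : E2 →ₗ[ℝ] E2) (sl2CLM_injective A)

/-!
In the eigenbasis `va, vr`, the chart `s ↦ [va + s • vr]` covers `ℝP¹ ∖ {a, r}` by `s ≠ 0` and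
conjugates `Â` to the contraction `s ↦ λ⁻² s`. For a compact annulus `C = {ρ ≤ |s| ≤ R}` with
`ρ > 0` and `N` so large that `λ⁻²ᴺ R < ρ`, the preimages of `K = [C]` under the iterates of
`Âᴺ` are pairwise disjoint; each has measure `≥ m K` and `m` is finite, so `m K = 0`. Countably
many such annuli exhaust `s ≠ 0`.
-/

open Function Metric
open scoped LinearAlgebra.Projectivization

section Wandering

variable {X : Type*} {f : X → X} {K : Set X}

lemma pairwise_disjoint_preimage_iterate (hK : ∀ n, 1 ≤ n → Disjoint K (f^[n] ⁻¹' K)) :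
    Pairwise (Disjoint on fun n => f^[n] ⁻¹' K) := by
  refine (pairwise_disjoint_on _).2 fun i j hij => ?_
  obtain ⟨k, rfl⟩ := Nat.exists_eq_add_of_lt hij
  rw [show i + k + 1 = (k + 1) + i by omega, iterate_add, preimage_comp]
  exact (hK (k + 1) k.succ_pos).preimage _

lemma Function.Semiconj.disjoint_image_preimage_iterate {Y : Type*} {g : Y → X} {φ : Y → Y}
    (h : Semiconj g φ f) (hg : Injective g) {C : Set Y} {n : ℕ}
    (hC : Disjoint C (φ^[n] ⁻¹' C)) : Disjoint (g '' C) (f^[n] ⁻¹' (g '' C)) := by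
  rw [disjoint_left]
  rintro _ ⟨s, hs, rfl⟩ hgs
  rw [mem_preimage, ← h.iterate_right n s, hg.mem_set_image] at hgs
  exact disjoint_left.1 hC hs hgs

variable [MeasurableSpace X] {m : Measure X}

lemma measure_eq_zero_of_disjoint_preimage_iterate [IsFiniteMeasure m] (hf : Measurable f)
    (hKm : MeasurableSet K) (hK : ∀ n, 1 ≤ n → Disjoint K (f^[n] ⁻¹' K))
    (hm : ∀ n, 1 ≤ n → m K ≤ m (f^[n] ⁻¹' K)) : m K = 0 := by
  by_contra hK0
  have hm' : ∀ n, m K ≤ m (f^[n] ⁻¹' K)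
    | 0 => le_rfl
    | n + 1 => hm (n + 1) n.succ_pos
  have htop : ∞ ≤ m univ := calc
    ∞ = ∑' _ : ℕ, m K := (ENNReal.tsum_const_eq_top_of_ne_zero hK0).symm
    _ ≤ ∑' n, m (f^[n] ⁻¹' K) := ENNReal.tsum_le_tsum hm'
    _ ≤ m (⋃ n, f^[n] ⁻¹' K) := tsum_meas_le_meas_iUnion_of_disjoint m
        (fun n => hf.iterate n hKm) (pairwise_disjoint_preimage_iterate hK)
    _ ≤ m univ := measure_mono (subset_univ _)
  exact measure_ne_top m univ (top_le_iff.1 htop)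

lemma measure_eq_zero_of_eventually_disjoint_preimage_iterate [IsFiniteMeasure m]
    (hf : Measurable f) (hKm : MeasurableSet K)
    (hK : ∀ᶠ n in atTop, Disjoint K (f^[n] ⁻¹' K))
    (hm : ∀ n, 1 ≤ n → m K ≤ m (f^[n] ⁻¹' K)) : m K = 0 := by
  obtain ⟨N, hN⟩ := eventually_atTop.1 hK
  refine measure_eq_zero_of_disjoint_preimage_iterate (f := f^[N + 1]) (hf.iterate _) hKm
    (fun n hn => ?_) (fun n hn => ?_)
  · rw [← iterate_mul]; exact hN _ (by nlinarith)
  · rw [← iterate_mul]; exact hm _ (by nlinarith)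

end Wandering

lemma eventually_disjoint_preimage_smul_iterate {𝕜 E : Type*} [NormedField 𝕜]
    [SeminormedAddCommGroup E] [NormedSpace 𝕜 E] {c : 𝕜} (hc : ‖c‖ < 1) {r R : ℝ} (hr : 0 < r) :
    ∀ᶠ n in atTop, Disjoint (closedBall (0 : E) R \ ball 0 r)
      ((c • ·)^[n] ⁻¹' (closedBall 0 R \ ball 0 r)) := by
  have hlim : Tendsto (fun n => ‖c‖ ^ n * R) atTop (𝓝 0) := by
    simpa using (tendsto_pow_atTop_nhds_zero_of_lt_one (norm_nonneg c) hc).mul_const R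
  filter_upwards [hlim.eventually (gt_mem_nhds hr)] with n hn
  rw [disjoint_left]
  rintro x ⟨hxR, -⟩ ⟨-, hcx⟩
  simp only [smul_iterate_apply, mem_ball, dist_zero_right, not_lt, norm_smul, norm_pow,
    mem_closedBall] at hxR hcx
  nlinarith [pow_nonneg (norm_nonneg c) n]

lemma compl_singleton_zero_subset_iUnion_closedBall_diff_ball {E : Type*} [NormedAddCommGroup E] :
    ({0}ᶜ : Set E) ⊆ ⋃ n : ℕ, closedBall 0 (n + 1) \ ball 0 (n + 1 : ℝ)⁻¹ := by
  intro x (hx : x ≠ 0)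
  have hx0 : 0 < ‖x‖ := norm_pos_iff.2 hx
  obtain ⟨n, hn⟩ := exists_nat_ge (max ‖x‖ ‖x‖⁻¹)
  refine mem_iUnion.2 ⟨n, ?_, ?_⟩
  · rw [mem_closedBall, dist_zero_right]; linarith [le_max_left ‖x‖ ‖x‖⁻¹]
  · rw [mem_ball, dist_zero_right, not_lt]
    exact inv_le_of_inv_le₀ hx0 (by linarith [le_max_right ‖x‖ ‖x‖⁻¹])

section PairOfVectors

variable {K V : Type*} [Field K] [AddCommGroup V] [Module K V] {u v : V}

lemma linearIndependent_pair_of_apply_eq_smul {f : V →ₗ[K] V} {a b : K} (hab : a ≠ b)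
    (hu : u ≠ 0) (hv : v ≠ 0) (hfu : f u = a • u) (hfv : f v = b • v) :
    LinearIndependent K ![u, v] :=
  Module.End.eigenvectors_linearIndependent' f ![a, b]
    (by intro i j; fin_cases i <;> fin_cases j <;> simp [hab, hab.symm]) ![u, v]
    (by intro i; fin_cases i
        · exact ⟨Module.End.mem_eigenspace_iff.2 hfu, hu⟩
        · exact ⟨Module.End.mem_eigenspace_iff.2 hfv, hv⟩)

lemma LinearIndependent.add_smul_ne_zero (h : LinearIndependent K ![u, v]) (s : K) :
    u + s • v ≠ 0 := fun h0 =>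
  one_ne_zero (LinearIndependent.pair_iff.1 h 1 s (by rwa [one_smul])).1

namespace Projectivization

def affineChart (h : LinearIndependent K ![u, v]) (s : K) : ℙ K V :=
  mk K (u + s • v) (h.add_smul_ne_zero s)

lemma affineChart_injective (h : LinearIndependent K ![u, v]) : Injective (affineChart h) := by
  intro s t hst
  obtain ⟨c, hc⟩ := (mk_eq_mk_iff' K (u + s • v) (u + t • v) _ _).1 hst
  obtain ⟨hc1, hcts⟩ := LinearIndependent.pair_iff.1 h (c - 1) (c * t - s)
    (by linear_combination (norm := module) hc)
  rw [sub_eq_zero] at hc1 hcts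
  rw [← hcts, hc1, one_mul]

lemma compl_pair_subset_image_affineChart (h : LinearIndependent K ![u, v])
    (hV : Module.finrank K V = 2) (hu : u ≠ 0) (hv : v ≠ 0) :
    ({mk K u hu, mk K v hv}ᶜ : Set (ℙ K V)) ⊆ affineChart h '' {0}ᶜ := by
  intro x hx
  induction x using ind with | h w hw => ?_
  simp only [mem_compl_iff, mem_insert_iff, mem_singleton_iff, not_or] at hx
  have hspan : w ∈ Submodule.span K {u, v} := by
    rw [← Matrix.range_cons_cons_empty, h.span_eq_top_of_card_eq_finrank (by simp [hV])]
    trivial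
  obtain ⟨c, d, rfl⟩ := Submodule.mem_span_pair.1 hspan
  have hc : c ≠ 0 := by
    rintro rfl
    exact hx.2 ((mk_eq_mk_iff' K _ _ _ _).2 ⟨d, by simp⟩)
  have hd : d ≠ 0 := by
    rintro rfl
    exact hx.1 ((mk_eq_mk_iff' K _ _ _ _).2 ⟨c, by simp⟩)
  refine ⟨d / c, div_ne_zero hd hc, (mk_eq_mk_iff' K _ _ _ _).2 ⟨c⁻¹, ?_⟩⟩
  rw [smul_add, smul_smul, smul_smul, inv_mul_cancel₀ hc, one_smul, inv_mul_eq_div]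

lemma semiconj_map_affineChart (h : LinearIndependent K ![u, v]) {f : V →ₗ[K] V}
    (hf : Injective f) {a b : K} (ha : a ≠ 0) (hfu : f u = a • u) (hfv : f v = b • v) :
    Semiconj (affineChart h) ((b / a) • ·) (map f hf) := by
  intro s
  refine ((mk_eq_mk_iff' K _ _ _ _).2 ⟨a, ?_⟩).symm
  simp only [map_add, map_smul, hfu, hfv, smul_add, smul_smul, smul_eq_mul]
  congr 2
  field_simp

end Projectivization

end PairOfVectors

lemma continuous_affineChart {u v : E2} (h : LinearIndependent ℝ ![u, v]) :
    Continuous (Projectivization.affineChart h : ℝ → RP1) :=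
  continuous_quotient_mk'.comp <|
    (continuous_const.add (continuous_id.smul continuous_const)).subtype_mk _

lemma continuous_projAction (A : SL2) : Continuous (projAction A) := by
  unfold projAction Projectivization.map
  exact Continuous.quotient_map'
    (((sl2CLM A).continuous.comp continuous_subtype_val).subtype_mk _) _

/-- `[x] ↦ (w ↦ ‖proj_x w‖²)`, a continuous injection of `ℝP¹` into a Hausdorff space. -/
def projLineNormSq : RP1 → (E2 → ℝ) :=
  Projectivization.lift (fun x w => inner ℝ (x : E2) w ^ 2 / ‖(x : E2)‖ ^ 2) <| by
    rintro ⟨_, hx⟩ ⟨y, -⟩ t rfl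
    have ht : t ≠ 0 := by rintro rfl; simp at hx
    funext w
    simp only [real_inner_smul_left, norm_smul, Real.norm_eq_abs, mul_pow, sq_abs]
    exact mul_div_mul_left _ _ (pow_ne_zero 2 ht)

lemma continuous_projLineNormSq : Continuous projLineNormSq :=
  continuous_quot_lift _ <| continuous_pi fun _ =>
    ((continuous_subtype_val.inner continuous_const).pow 2).div
      (continuous_subtype_val.norm.pow 2) fun x => pow_ne_zero 2 (norm_ne_zero_iff.2 x.2)

lemma projLineNormSq_injective : Injective projLineNormSq := by
  intro x y hxy
  induction x using Projectivization.ind with | h a ha => ?_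
  induction y using Projectivization.ind with | h b hb => ?_
  have hab : inner ℝ b a ^ 2 = (‖b‖ * ‖a‖) ^ 2 := by
    have := congrFun hxy a
    simp only [projLineNormSq, Projectivization.lift_mk, real_inner_self_eq_norm_sq] at this
    field_simp at this
    linear_combination -this
  obtain ⟨-, r, -, rfl⟩ := (abs_real_inner_div_norm_mul_norm_eq_one_iff b a).1 <| by
    rw [← pow_eq_one_iff_of_nonneg (abs_nonneg _) two_ne_zero, sq_abs, div_pow, hab,
      div_self (by positivity)]
  exact (Projectivization.mk_eq_mk_iff' ℝ _ _ _ _).2 ⟨r, rfl⟩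

instance : T2Space RP1 :=
  T2Space.of_injective_continuous projLineNormSq_injective continuous_projLineNormSq

/-- Let `A ∈ SL(2,ℝ)` be hyperbolic, with projective attractor `a` and
repeller `r` (the classes of eigenvectors for the eigenvalues of modulus `> 1`, `< 1`).
If `m` is a finite Borel measure on `ℝP¹` with `m(Â⁻ˡ(K)) ≥ m(K)` for every compact `K`
and every `l ≥ 1`, then `m` is supported on `{a, r}`. -/
theorem almost_invariant_supported_on_fixed_points (A : SL2)
    (va vr : E2) (hva : va ≠ 0) (hvr : vr ≠ 0) (lam : ℝ) (hlam : 1 < |lam|)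
    (heva : sl2CLM A va = lam • va) (hevr : sl2CLM A vr = lam⁻¹ • vr)
    (m : Measure RP1) [IsFiniteMeasure m]
    (hm : ∀ K : Set RP1, IsCompact K → ∀ l : ℕ, 1 ≤ l →
      m K ≤ m ((projAction A)^[l] ⁻¹' K)) :
    m ({Projectivization.mk ℝ va hva, Projectivization.mk ℝ vr hvr}ᶜ) = 0 := by
  have hlam0 : lam ≠ 0 := by rintro rfl; norm_num at hlam
  have hcontr : ‖lam⁻¹ / lam‖ < 1 := by
    rw [norm_div, norm_inv, Real.norm_eq_abs, div_lt_one (by positivity)]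
    exact (inv_lt_one_of_one_lt₀ hlam).trans hlam
  have hind : LinearIndependent ℝ ![va, vr] :=
    linearIndependent_pair_of_apply_eq_smul
      (fun h => by linarith [abs_inv lam ▸ congrArg abs h, inv_lt_one_of_one_lt₀ hlam])
      hva hvr heva hevr
  set g := Projectivization.affineChart hind
  have hsemi : Semiconj g ((lam⁻¹ / lam) • ·) (projAction A) :=
    Projectivization.semiconj_map_affineChart hind _ hlam0 heva hevr
  have hannulus : ∀ n : ℕ, m (g '' (closedBall 0 (n + 1) \ ball 0 (n + 1 : ℝ)⁻¹)) = 0 := by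
    intro n
    have hK : IsCompact (g '' (closedBall 0 (n + 1) \ ball 0 (n + 1 : ℝ)⁻¹)) :=
      ((isCompact_closedBall _ _).diff isOpen_ball).image (continuous_affineChart hind)
    exact measure_eq_zero_of_eventually_disjoint_preimage_iterate
      (continuous_projAction A).measurable hK.isClosed.measurableSet
      ((eventually_disjoint_preimage_smul_iterate hcontr (by positivity)).mono fun _ =>
        hsemi.disjoint_image_preimage_iterate (Projectivization.affineChart_injective hind))
      (hm _ hK)
  refine measure_mono_null ?_ (measure_iUnion_null hannulus)
  rw [← image_iUnion]
  exact (Projectivization.compl_pair_subset_image_affineChart hind (by simp) hva hvr).trans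
    (image_mono compl_singleton_zero_subset_iUnion_closedBall_diff_ball)
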